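/- Given an observer \(\hat S\) and an unobservable family \(\Psi\) (binary tree of input-output segments as in the unobservability definition), there exists a branch-selection sequence \(\{j(k)\}_{k=1}^\infty\) with \(j(k) \in \{1,\dots,2^k\}\) and \(j(k+1) \in \{2j(k)-1, 2j(k)\}\), such that for every \(k\), the observer's predicted output on segment \((k,j(k))\) differs from the segment's output at every time in \(\{T_{(i,j(i))}\}_{i=1}^k\). -/
import Mathlib


/-- A candidate observer. -/
structure Observer (E Y Q : Type*) where
  f : Q → E → Y → Q
  g : Q → E → Y
  q0 : Q

def Observer.state {E Y Q : Type*} (S : Observer E Y Q) (u : ℕ → E) (y : ℕ → Y) : ℕ → Q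
  | 0 => S.q0
  | t + 1 => S.f (Observer.state S u y t) (u t) (y t)

def Observer.est {E Y Q : Type*} (S : Observer E Y Q) (u : ℕ → E) (y : ℕ → Y) (t : ℕ) : Y :=
  S.g (Observer.state S u y t) (u t)

lemma Observer.state_congr {E Y Q : Type*} (S : Observer E Y Q) {u u' : ℕ → E} {y y' : ℕ → Y}
    (t : ℕ) (hu : ∀ s, s < t → u s = u' s) (hy : ∀ s, s < t → y s = y' s) :
    S.state u y t = S.state u' y' t := by
  induction t with
  | zero => rfl
  | succ t ih =>
    simp only [Observer.state]
    rw [ih (fun s hs => hu s (hs.trans (Nat.lt_succ_self t)))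
        (fun s hs => hy s (hs.trans (Nat.lt_succ_self t))),
      hu t (Nat.lt_succ_self t), hy t (Nat.lt_succ_self t)]

lemma Observer.est_congr {E Y Q : Type*} (S : Observer E Y Q) {u u' : ℕ → E} {y y' : ℕ → Y}
    (t : ℕ) (hu : ∀ s, s ≤ t → u s = u' s) (hy : ∀ s, s < t → y s = y' s) :
    S.est u y t = S.est u' y' t := by
  unfold Observer.est
  rw [Observer.state_congr S t (fun s hs => hu s hs.le) hy, hu t le_rfl]

open Classical in
noncomputable def selFun {E Y Q : Type*} (S : Observer E Y Q) (Tk : ℕ → ℕ → ℕ)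
    (useg : ℕ → ℕ → ℕ → E) (yseg : ℕ → ℕ → ℕ → Y) : ℕ → ℕ
  | 0 => 1
  | k + 1 =>
    let j := selFun S Tk useg yseg k
    if Observer.est S (useg (k+1) (2*j-1)) (yseg (k+1) (2*j-1)) (Tk (k+1) (2*j-1))
        = yseg (k+1) (2*j-1) (Tk (k+1) (2*j-1)) then 2*j else 2*j-1

lemma selFun_zero {E Y Q : Type*} (S : Observer E Y Q) (Tk : ℕ → ℕ → ℕ)
    (useg : ℕ → ℕ → ℕ → E) (yseg : ℕ → ℕ → ℕ → Y) : selFun S Tk useg yseg 0 = 1 := rfl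

lemma selFun_succ {E Y Q : Type*} (S : Observer E Y Q) (Tk : ℕ → ℕ → ℕ)
    (useg : ℕ → ℕ → ℕ → E) (yseg : ℕ → ℕ → ℕ → Y) (k : ℕ) :
    (selFun S Tk useg yseg (k+1) = 2 * selFun S Tk useg yseg k - 1 ∧
      Observer.est S (useg (k+1) (2*selFun S Tk useg yseg k-1))
          (yseg (k+1) (2*selFun S Tk useg yseg k-1)) (Tk (k+1) (2*selFun S Tk useg yseg k-1))
        ≠ yseg (k+1) (2*selFun S Tk useg yseg k-1) (Tk (k+1) (2*selFun S Tk useg yseg k-1))) ∨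
    (selFun S Tk useg yseg (k+1) = 2 * selFun S Tk useg yseg k ∧
      Observer.est S (useg (k+1) (2*selFun S Tk useg yseg k-1))
          (yseg (k+1) (2*selFun S Tk useg yseg k-1)) (Tk (k+1) (2*selFun S Tk useg yseg k-1))
        = yseg (k+1) (2*selFun S Tk useg yseg k-1) (Tk (k+1) (2*selFun S Tk useg yseg k-1))) := by
  classical
  by_cases hc : Observer.est S (useg (k+1) (2*selFun S Tk useg yseg k-1))
      (yseg (k+1) (2*selFun S Tk useg yseg k-1)) (Tk (k+1) (2*selFun S Tk useg yseg k-1))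
    = yseg (k+1) (2*selFun S Tk useg yseg k-1) (Tk (k+1) (2*selFun S Tk useg yseg k-1))
  · right; exact ⟨by simp [selFun, hc], hc⟩
  · left; exact ⟨by simp [selFun, hc], hc⟩

/-- Given any deterministic observer `Ŝ` and an unobservable family `Ψ` (binary tree of
input-output segments satisfying the sibling and extension properties), there exists a
branch selection `j(k)` such that the observer's predicted output on segment `(k, j(k))`
differs from the segment's output at every branching time `T_{(i, j(i))}`, `i = 1, …, k`;
moreover successive selected segments extend each other on inputs. -/
theorem stmt_15 {E Y QS : Type*} (S : Observer E Y QS)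
    (Tk : ℕ → ℕ → ℕ) (useg : ℕ → ℕ → ℕ → E) (yseg : ℕ → ℕ → ℕ → Y)
    (hi : ∀ k, 1 ≤ k → ∀ j, 1 ≤ j → j ≤ 2 ^ (k - 1) →
      Tk k (2 * j - 1) = Tk k (2 * j) ∧
      (∀ t, t ≤ Tk k (2 * j - 1) → useg k (2 * j - 1) t = useg k (2 * j) t) ∧
      (∀ t, t < Tk k (2 * j - 1) → yseg k (2 * j - 1) t = yseg k (2 * j) t) ∧
      yseg k (2 * j - 1) (Tk k (2 * j - 1)) ≠ yseg k (2 * j) (Tk k (2 * j - 1)))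
    (hii : ∀ k, 2 ≤ k → ∀ j, 1 ≤ j → j ≤ 2 ^ (k - 1) →
      Tk (k - 1) j < Tk k (2 * j) ∧
      ∀ t, t ≤ Tk (k - 1) j →
        useg k (2 * j) t = useg (k - 1) j t ∧ yseg k (2 * j) t = yseg (k - 1) j t) :
    ∃ jfun : ℕ → ℕ,
      (∀ k, 1 ≤ k → 1 ≤ jfun k ∧ jfun k ≤ 2 ^ k) ∧
      (∀ k, 2 ≤ k → jfun k = 2 * jfun (k - 1) - 1 ∨ jfun k = 2 * jfun (k - 1)) ∧
      (∀ k, 2 ≤ k → ∀ t, t ≤ Tk (k - 1) (jfun (k - 1)) →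
        useg k (jfun k) t = useg (k - 1) (jfun (k - 1)) t) ∧
      (∀ k, 1 ≤ k → ∀ i, 1 ≤ i → i ≤ k →
        Observer.est S (useg k (jfun k)) (yseg k (jfun k)) (Tk i (jfun i))
          ≠ yseg k (jfun k) (Tk i (jfun i))) := by
  classical
  set jf : ℕ → ℕ := selFun S Tk useg yseg with hjfdef
  have key : ∀ k : ℕ, (1 ≤ jf k ∧ jf k ≤ 2 ^ k) ∧
      (∀ i, 1 ≤ i → i ≤ k → Tk i (jf i) ≤ Tk k (jf k)) ∧
      (∀ i, 1 ≤ i → i ≤ k →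
        Observer.est S (useg k (jf k)) (yseg k (jf k)) (Tk i (jf i))
          ≠ yseg k (jf k) (Tk i (jf i))) ∧
      (2 ≤ k → ∀ t, t ≤ Tk (k - 1) (jf (k - 1)) →
        useg k (jf k) t = useg (k - 1) (jf (k - 1)) t) := by
    intro k
    induction k with
    | zero =>
      exact ⟨⟨le_refl 1, le_of_eq (selFun_zero S Tk useg yseg)⟩,
        fun i h1 h2 => absurd (h1.trans h2) (by norm_num),
        fun i h1 h2 => absurd (h1.trans h2) (by norm_num),
        fun h => absurd h (by norm_num)⟩
    | succ k ih =>
      obtain ⟨⟨hj1, hj2⟩, hmono, herr, _⟩ := ih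
      have hj2' : jf k ≤ 2 ^ ((k + 1) - 1) := by simpa using hj2
      obtain ⟨hTeq, hu, hy, hne⟩ := hi (k + 1) (Nat.le_add_left 1 k) (jf k) hj1 hj2'
      have hchild := selFun_succ S Tk useg yseg k
      rw [← hjfdef] at hchild
      -- sibling estimates agree at the branching time
      have hest : Observer.est S (useg (k+1) (2*jf k-1)) (yseg (k+1) (2*jf k-1))
            (Tk (k+1) (2*jf k-1))
          = Observer.est S (useg (k+1) (2*jf k)) (yseg (k+1) (2*jf k)) (Tk (k+1) (2*jf k-1)) :=
        S.est_congr _ (fun s hs => hu s hs) (fun s hs => hy s hs)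
      -- own error at the new branching time
      have hown : Observer.est S (useg (k+1) (jf (k+1))) (yseg (k+1) (jf (k+1)))
            (Tk (k+1) (jf (k+1))) ≠ yseg (k+1) (jf (k+1)) (Tk (k+1) (jf (k+1))) := by
        rcases hchild with ⟨he, hn⟩ | ⟨he, hq⟩
        · rw [he]; exact hn
        · rw [he, ← hTeq, ← hest, hq]; exact hne
      have hTc : Tk (k+1) (jf (k+1)) = Tk (k+1) (2 * jf k) := by
        rcases hchild with ⟨he, _⟩ | ⟨he, _⟩
        · rw [he, hTeq]
        · rw [he]
      have hp : 2 ^ (k + 1) = 2 * 2 ^ k := by rw [pow_succ]; ring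
      have hb : 1 ≤ jf (k+1) ∧ jf (k+1) ≤ 2 ^ (k+1) := by
        rcases hchild with ⟨he, _⟩ | ⟨he, _⟩ <;> omega
      -- agreement with the parent segment (needs k ≥ 1)
      have hagree : 1 ≤ k → ∀ t, t ≤ Tk k (jf k) →
          useg (k+1) (jf (k+1)) t = useg k (jf k) t ∧
          yseg (k+1) (jf (k+1)) t = yseg k (jf k) t := by
        intro hk t ht
        obtain ⟨hTlt, hext⟩ := hii (k + 1) (by omega) (jf k) hj1 hj2'
        simp only [Nat.add_sub_cancel] at hTlt hext
        have h2j := hext t ht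
        rcases hchild with ⟨he, _⟩ | ⟨he, _⟩
        · rw [he]
          have htlt : t < Tk (k+1) (2 * jf k - 1) := by omega
          exact ⟨(hu t htlt.le).trans h2j.1, (hy t htlt).trans h2j.2⟩
        · rw [he]; exact h2j
      have hTlt' : 1 ≤ k → Tk k (jf k) < Tk (k+1) (jf (k+1)) := by
        intro hk
        obtain ⟨hTlt, _⟩ := hii (k + 1) (by omega) (jf k) hj1 hj2'
        simp only [Nat.add_sub_cancel] at hTlt
        omega
      refine ⟨hb, ?_, ?_, ?_⟩
      · intro i h1 h2
        by_cases hik : i = k + 1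
        · subst hik; exact le_rfl
        · have hik' : i ≤ k := by omega
          have hk : 1 ≤ k := h1.trans hik'
          exact le_of_lt (lt_of_le_of_lt (hmono i h1 hik') (hTlt' hk))
      · intro i h1 h2
        by_cases hik : i = k + 1
        · subst hik; exact hown
        · have hik' : i ≤ k := by omega
          have hk : 1 ≤ k := h1.trans hik'
          have hs : Tk i (jf i) ≤ Tk k (jf k) := hmono i h1 hik'
          have hestp : Observer.est S (useg (k+1) (jf (k+1))) (yseg (k+1) (jf (k+1)))
                (Tk i (jf i))
              = Observer.est S (useg k (jf k)) (yseg k (jf k)) (Tk i (jf i)) :=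
            S.est_congr _ (fun s hx => (hagree hk s (hx.trans hs)).1)
              (fun s hx => (hagree hk s ((le_of_lt hx).trans hs)).2)
          rw [hestp, (hagree hk _ hs).2]
          exact herr i h1 hik'
      · intro h2k
        simp only [Nat.add_sub_cancel]
        intro t ht
        exact (hagree (by omega) t ht).1
  refine ⟨jf, fun k _ => (key k).1, ?_, ?_, fun k _ i h1 h2 => (key k).2.2.1 i h1 h2⟩
  · intro k hk
    obtain ⟨m, rfl⟩ : ∃ m, k = m + 1 := ⟨k - 1, by omega⟩
    simp only [Nat.add_sub_cancel]
    have hchild := selFun_succ S Tk useg yseg m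
    rw [← hjfdef] at hchild
    rcases hchild with ⟨he, _⟩ | ⟨he, _⟩
    · exact Or.inl he
    · exact Or.inr he
  · intro k hk t ht
    exact (key k).2.2.2 hk t ht
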